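/- Each of the three sets (0,∞)³, (0,1)³ and (1,∞)³ in ℝ³ is forward-invariant for the ODE system (instB2): if (a0, a+, a−) : [t1, t2] → ℝ³ is a C¹ solution of (instB2) with [t1, t2] ⊂ (0,∞) and (a0, a+, a−)(t1) lies in one of these sets, then (a0, a+, a−)(t) lies in the same set for all t ∈ [t1, t2]. -/

import Mathlib

open Set Filter Topology

lemma invariance_aux {n : ℕ} (u u' : Fin n → ℝ → ℝ) (t1 t2 K : ℝ)
    (ht12 : t1 ≤ t2)
    (hderiv : ∀ i, ∀ t ∈ Icc t1 t2, HasDerivAt (u i) (u' i t) t)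
    (hK : ∀ i, ∀ t ∈ Icc t1 t2, (∀ j, 0 ≤ u j t) → -K * u i t ≤ u' i t)
    (hpos : ∀ i, 0 < u i t1) :
    ∀ t ∈ Icc t1 t2, ∀ i, 0 < u i t := by
  set S : Set ℝ := {t | t ∈ Icc t1 t2 ∧ ∀ s ∈ Icc t1 t, ∀ i, 0 ≤ u i s} with hS
  have ht1S : t1 ∈ S := ⟨⟨le_refl _, ht12⟩, fun s hs i => by
    have hst : s = t1 := le_antisymm hs.2 hs.1
    rw [hst]; exact (hpos i).le⟩
  have hbdd : BddAbove S := ⟨t2, fun t ht => ht.1.2⟩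
  have hne : S.Nonempty := ⟨t1, ht1S⟩
  set τ := sSup S with hτ
  have ht1τ : t1 ≤ τ := le_csSup hbdd ht1S
  have hτt2 : τ ≤ t2 := csSup_le hne (fun t ht => ht.1.2)
  have hlt : ∀ s ∈ Ico t1 τ, ∀ i, 0 ≤ u i s := by
    intro s hs i
    obtain ⟨t, htS, hst⟩ := exists_lt_of_lt_csSup hne hs.2
    exact htS.2 s ⟨hs.1, hst.le⟩ i
  have hnonneg : ∀ s ∈ Icc t1 τ, ∀ i, 0 ≤ u i s := by
    intro s hs i
    rcases lt_or_eq_of_le hs.2 with h | h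
    · exact hlt s ⟨hs.1, h⟩ i
    · rcases lt_or_eq_of_le hs.1 with h1 | h1
      · have hcont : Tendsto (u i) (𝓝[<] s) (𝓝 (u i s)) :=
          ((hderiv i s ⟨hs.1, h ▸ hτt2⟩).continuousAt.continuousWithinAt)
        refine ge_of_tendsto hcont ?_
        filter_upwards [Ioo_mem_nhdsLT h1] with x hx
        exact hlt x ⟨hx.1.le, lt_of_lt_of_le hx.2 h.le⟩ i
      · rw [← h1]; exact (hpos i).le
  have hposτ : ∀ t ∈ Icc t1 τ, ∀ i, 0 < u i t := by
    intro t ht i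
    set v : ℝ → ℝ := fun s => u i s * Real.exp (K * s) with hv
    have hvd : ∀ s ∈ Icc t1 t2, HasDerivAt v ((u' i s + K * u i s) * Real.exp (K * s)) s := by
      intro s hs
      have h1 : HasDerivAt (fun x => Real.exp (K * x)) (Real.exp (K * s) * (K * 1)) s :=
        ((hasDerivAt_id s).const_mul K).exp
      have h2 := (hderiv i s hs).mul h1
      exact h2.congr_deriv (by ring)
    have hmono : MonotoneOn v (Icc t1 τ) := by
      apply monotoneOn_of_deriv_nonneg (convex_Icc t1 τ)
      · exact fun s hs => (hvd s ⟨hs.1, hs.2.trans hτt2⟩).continuousAt.continuousWithinAt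
      · intro s hs
        rw [interior_Icc] at hs
        exact (hvd s ⟨hs.1.le, hs.2.le.trans hτt2⟩).differentiableAt.differentiableWithinAt
      · intro s hs
        rw [interior_Icc] at hs
        have hs' : s ∈ Icc t1 t2 := ⟨hs.1.le, hs.2.le.trans hτt2⟩
        rw [(hvd s hs').deriv]
        have h0 : ∀ j, 0 ≤ u j s := hnonneg s ⟨hs.1.le, hs.2.le⟩
        have hKi := hK i s hs' h0
        have he := (Real.exp_pos (K * s)).le
        have : 0 ≤ u' i s + K * u i s := by linarith
        exact mul_nonneg this he
    have h1 := hmono ⟨le_refl _, ht1τ⟩ ht ht.1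
    simp only [hv] at h1
    have h2 : 0 < u i t1 * Real.exp (K * t1) := mul_pos (hpos i) (Real.exp_pos _)
    nlinarith [Real.exp_pos (K * t)]
  have hτeq : τ = t2 := by
    by_contra hne2
    have hτlt : τ < t2 := lt_of_le_of_ne hτt2 hne2
    have hposτ' : ∀ i, 0 < u i τ := hposτ τ ⟨ht1τ, le_refl _⟩
    have hev : ∀ᶠ s in nhds τ, ∀ i, 0 < u i s := by
      rw [eventually_all]
      intro i
      have := (hderiv i τ ⟨ht1τ, hτt2⟩).continuousAt.preimage_mem_nhds
        (Ioi_mem_nhds (hposτ' i))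
      filter_upwards [this] with x hx; exact hx
    rw [Metric.eventually_nhds_iff] at hev
    obtain ⟨ε, hε, hball⟩ := hev
    set t' := min (τ + ε/2) t2 with ht'
    have hτt' : τ < t' := lt_min (by linarith) hτlt
    have ht'S : t' ∈ S := by
      refine ⟨⟨ht1τ.trans hτt'.le, min_le_right _ _⟩, ?_⟩
      intro s hs i
      rcases le_or_gt s τ with h | h
      · exact hnonneg s ⟨hs.1, h⟩ i
      · have hd : dist s τ < ε := by
          rw [Real.dist_eq, abs_of_pos (by linarith)]
          have h1 : s ≤ t' := hs.2
          have h2 : t' ≤ τ + ε/2 := min_le_left _ _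
          linarith
        exact (hball hd i).le
    have := le_csSup hbdd ht'S
    linarith
  intro t ht i
  exact hposτ t (by rw [hτeq]; exact ht) i

def IsSolInstB2 (f0 fp fm a0 ap am : ℝ → ℝ) (s : Set ℝ) : Prop :=
  ∀ t ∈ s,
    HasDerivAt a0 (f0 t * (ap t * am t - a0 t)) t ∧
    HasDerivAt ap (fp t * (a0 t * am t - ap t)) t ∧
    HasDerivAt am (fm t * (a0 t * ap t - am t)) t

theorem forward_invariant_cubes_instB2 (f0 fp fm a0 ap am : ℝ → ℝ) (t1 t2 : ℝ)
    (ht1 : 0 < t1) (ht12 : t1 ≤ t2)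
    (hf0c : ContinuousOn f0 (Ioi 0)) (hfpc : ContinuousOn fp (Ioi 0))
    (hfmc : ContinuousOn fm (Ioi 0))
    (hf0 : ∀ t ∈ Ioi (0 : ℝ), 0 < f0 t) (hfp : ∀ t ∈ Ioi (0 : ℝ), 0 < fp t)
    (hfm : ∀ t ∈ Ioi (0 : ℝ), 0 < fm t)
    (hsol : IsSolInstB2 f0 fp fm a0 ap am (Icc t1 t2)) :
    ((0 < a0 t1 ∧ 0 < ap t1 ∧ 0 < am t1) →
      ∀ t ∈ Icc t1 t2, 0 < a0 t ∧ 0 < ap t ∧ 0 < am t) ∧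
    ((a0 t1 ∈ Ioo (0 : ℝ) 1 ∧ ap t1 ∈ Ioo (0 : ℝ) 1 ∧ am t1 ∈ Ioo (0 : ℝ) 1) →
      ∀ t ∈ Icc t1 t2, a0 t ∈ Ioo (0 : ℝ) 1 ∧ ap t ∈ Ioo (0 : ℝ) 1 ∧ am t ∈ Ioo (0 : ℝ) 1) ∧
    ((1 < a0 t1 ∧ 1 < ap t1 ∧ 1 < am t1) →
      ∀ t ∈ Icc t1 t2, 1 < a0 t ∧ 1 < ap t ∧ 1 < am t) := by
  have hsub : Icc t1 t2 ⊆ Ioi (0:ℝ) := fun t ht => lt_of_lt_of_le ht1 ht.1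
  obtain ⟨K0, hK0⟩ := isCompact_Icc.exists_bound_of_continuousOn (hf0c.mono hsub)
  obtain ⟨Kp, hKp⟩ := isCompact_Icc.exists_bound_of_continuousOn (hfpc.mono hsub)
  obtain ⟨Km, hKm⟩ := isCompact_Icc.exists_bound_of_continuousOn (hfmc.mono hsub)
  set K := max K0 (max Kp Km) with hKdef
  have hb0 : ∀ t ∈ Icc t1 t2, f0 t ≤ K := by
    intro t ht
    have := hK0 t ht; rw [Real.norm_eq_abs] at this
    have h2 := le_abs_self (f0 t)
    have h3 : K0 ≤ K := le_max_left _ _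
    linarith
  have hbp : ∀ t ∈ Icc t1 t2, fp t ≤ K := by
    intro t ht
    have := hKp t ht; rw [Real.norm_eq_abs] at this
    have h2 := le_abs_self (fp t)
    have h3 : Kp ≤ K := le_trans (le_max_left _ _) (le_max_right _ _)
    linarith
  have hbm : ∀ t ∈ Icc t1 t2, fm t ≤ K := by
    intro t ht
    have := hKm t ht; rw [Real.norm_eq_abs] at this
    have h2 := le_abs_self (fm t)
    have h3 : Km ≤ K := le_trans (le_max_right _ _) (le_max_right _ _)
    linarith
  refine ⟨?_, ?_, ?_⟩
  · -- (0,∞)³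
    intro hinit t ht
    have key := invariance_aux ![a0, ap, am]
      ![fun t => f0 t * (ap t * am t - a0 t),
        fun t => fp t * (a0 t * am t - ap t),
        fun t => fm t * (a0 t * ap t - am t)] t1 t2 K ht12
      (by
        intro i t ht
        fin_cases i
        · exact (hsol t ht).1
        · exact (hsol t ht).2.1
        · exact (hsol t ht).2.2)
      (by
        intro i t ht hj
        have h0 : (0:ℝ) ≤ a0 t := hj 0
        have h1 : (0:ℝ) ≤ ap t := hj 1
        have h2 : (0:ℝ) ≤ am t := hj 2
        have hp0 := hf0 t (hsub ht); have hpp := hfp t (hsub ht); have hpm := hfm t (hsub ht)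
        have hk0 := hb0 t ht; have hkp := hbp t ht; have hkm := hbm t ht
        fin_cases i
        · show -K * a0 t ≤ f0 t * (ap t * am t - a0 t)
          nlinarith [mul_nonneg (mul_nonneg hp0.le h1) h2, mul_nonneg (sub_nonneg.2 hk0) h0]
        · show -K * ap t ≤ fp t * (a0 t * am t - ap t)
          nlinarith [mul_nonneg (mul_nonneg hpp.le h0) h2, mul_nonneg (sub_nonneg.2 hkp) h1]
        · show -K * am t ≤ fm t * (a0 t * ap t - am t)
          nlinarith [mul_nonneg (mul_nonneg hpm.le h0) h1, mul_nonneg (sub_nonneg.2 hkm) h2])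
      (by
        intro i
        fin_cases i
        · exact hinit.1
        · exact hinit.2.1
        · exact hinit.2.2) t ht
    exact ⟨key 0, key 1, key 2⟩
  · -- (0,1)³
    intro hinit t ht
    have key := invariance_aux
      ![a0, ap, am, fun t => 1 - a0 t, fun t => 1 - ap t, fun t => 1 - am t]
      ![fun t => f0 t * (ap t * am t - a0 t),
        fun t => fp t * (a0 t * am t - ap t),
        fun t => fm t * (a0 t * ap t - am t),
        fun t => -(f0 t * (ap t * am t - a0 t)),
        fun t => -(fp t * (a0 t * am t - ap t)),
        fun t => -(fm t * (a0 t * ap t - am t))] t1 t2 K ht12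
      (by
        intro i t ht
        fin_cases i
        · exact (hsol t ht).1
        · exact (hsol t ht).2.1
        · exact (hsol t ht).2.2
        · show HasDerivAt (fun t => 1 - a0 t) (-(f0 t * (ap t * am t - a0 t))) t
          exact ((hasDerivAt_const t (1:ℝ)).sub (hsol t ht).1).congr_deriv (by ring)
        · show HasDerivAt (fun t => 1 - ap t) (-(fp t * (a0 t * am t - ap t))) t
          exact ((hasDerivAt_const t (1:ℝ)).sub (hsol t ht).2.1).congr_deriv (by ring)
        · show HasDerivAt (fun t => 1 - am t) (-(fm t * (a0 t * ap t - am t))) t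
          exact ((hasDerivAt_const t (1:ℝ)).sub (hsol t ht).2.2).congr_deriv (by ring))
      (by
        intro i t ht hj
        have h0 : (0:ℝ) ≤ a0 t := hj 0
        have h1 : (0:ℝ) ≤ ap t := hj 1
        have h2 : (0:ℝ) ≤ am t := hj 2
        have h3 : (0:ℝ) ≤ 1 - a0 t := hj 3
        have h4 : (0:ℝ) ≤ 1 - ap t := hj 4
        have h5 : (0:ℝ) ≤ 1 - am t := hj 5
        have hp0 := hf0 t (hsub ht); have hpp := hfp t (hsub ht); have hpm := hfm t (hsub ht)
        have hk0 := hb0 t ht; have hkp := hbp t ht; have hkm := hbm t ht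
        fin_cases i
        · show -K * a0 t ≤ f0 t * (ap t * am t - a0 t)
          nlinarith [mul_nonneg (mul_nonneg hp0.le h1) h2, mul_nonneg (sub_nonneg.2 hk0) h0]
        · show -K * ap t ≤ fp t * (a0 t * am t - ap t)
          nlinarith [mul_nonneg (mul_nonneg hpp.le h0) h2, mul_nonneg (sub_nonneg.2 hkp) h1]
        · show -K * am t ≤ fm t * (a0 t * ap t - am t)
          nlinarith [mul_nonneg (mul_nonneg hpm.le h0) h1, mul_nonneg (sub_nonneg.2 hkm) h2]
        · show -K * (1 - a0 t) ≤ -(f0 t * (ap t * am t - a0 t))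
          nlinarith [mul_nonneg (sub_nonneg.2 hk0) h3,
            mul_nonneg hp0.le (mul_nonneg h4 h2), mul_nonneg hp0.le h5]
        · show -K * (1 - ap t) ≤ -(fp t * (a0 t * am t - ap t))
          nlinarith [mul_nonneg (sub_nonneg.2 hkp) h4,
            mul_nonneg hpp.le (mul_nonneg h3 h2), mul_nonneg hpp.le h5]
        · show -K * (1 - am t) ≤ -(fm t * (a0 t * ap t - am t))
          nlinarith [mul_nonneg (sub_nonneg.2 hkm) h5,
            mul_nonneg hpm.le (mul_nonneg h3 h1), mul_nonneg hpm.le h4])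
      (by
        intro i
        fin_cases i
        · exact hinit.1.1
        · exact hinit.2.1.1
        · exact hinit.2.2.1
        · show (0:ℝ) < 1 - a0 t1; linarith [hinit.1.2]
        · show (0:ℝ) < 1 - ap t1; linarith [hinit.2.1.2]
        · show (0:ℝ) < 1 - am t1; linarith [hinit.2.2.2]) t ht
    have k3 : (0:ℝ) < 1 - a0 t := key 3
    have k4 : (0:ℝ) < 1 - ap t := key 4
    have k5 : (0:ℝ) < 1 - am t := key 5
    exact ⟨⟨key 0, by linarith⟩, ⟨key 1, by linarith⟩, ⟨key 2, by linarith⟩⟩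
  · -- (1,∞)³
    intro hinit t ht
    have key := invariance_aux
      ![fun t => a0 t - 1, fun t => ap t - 1, fun t => am t - 1]
      ![fun t => f0 t * (ap t * am t - a0 t),
        fun t => fp t * (a0 t * am t - ap t),
        fun t => fm t * (a0 t * ap t - am t)] t1 t2 K ht12
      (by
        intro i t ht
        fin_cases i
        · show HasDerivAt (fun t => a0 t - 1) (f0 t * (ap t * am t - a0 t)) t
          exact ((hsol t ht).1.sub (hasDerivAt_const t (1:ℝ))).congr_deriv (by ring)
        · show HasDerivAt (fun t => ap t - 1) (fp t * (a0 t * am t - ap t)) t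
          exact ((hsol t ht).2.1.sub (hasDerivAt_const t (1:ℝ))).congr_deriv (by ring)
        · show HasDerivAt (fun t => am t - 1) (fm t * (a0 t * ap t - am t)) t
          exact ((hsol t ht).2.2.sub (hasDerivAt_const t (1:ℝ))).congr_deriv (by ring))
      (by
        intro i t ht hj
        have h0 : (0:ℝ) ≤ a0 t - 1 := hj 0
        have h1 : (0:ℝ) ≤ ap t - 1 := hj 1
        have h2 : (0:ℝ) ≤ am t - 1 := hj 2
        have hp0 := hf0 t (hsub ht); have hpp := hfp t (hsub ht); have hpm := hfm t (hsub ht)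
        have hk0 := hb0 t ht; have hkp := hbp t ht; have hkm := hbm t ht
        fin_cases i
        · show -K * (a0 t - 1) ≤ f0 t * (ap t * am t - a0 t)
          nlinarith [mul_nonneg (sub_nonneg.2 hk0) h0, mul_nonneg hp0.le (mul_nonneg h1 h2),
            mul_nonneg hp0.le h1, mul_nonneg hp0.le h2]
        · show -K * (ap t - 1) ≤ fp t * (a0 t * am t - ap t)
          nlinarith [mul_nonneg (sub_nonneg.2 hkp) h1, mul_nonneg hpp.le (mul_nonneg h0 h2),
            mul_nonneg hpp.le h0, mul_nonneg hpp.le h2]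
        · show -K * (am t - 1) ≤ fm t * (a0 t * ap t - am t)
          nlinarith [mul_nonneg (sub_nonneg.2 hkm) h2, mul_nonneg hpm.le (mul_nonneg h0 h1),
            mul_nonneg hpm.le h0, mul_nonneg hpm.le h1])
      (by
        intro i
        fin_cases i
        · show (0:ℝ) < a0 t1 - 1; linarith [hinit.1]
        · show (0:ℝ) < ap t1 - 1; linarith [hinit.2.1]
        · show (0:ℝ) < am t1 - 1; linarith [hinit.2.2]) t ht
    have k0 : (0:ℝ) < a0 t - 1 := key 0
    have k1 : (0:ℝ) < ap t - 1 := key 1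
    have k2 : (0:ℝ) < am t - 1 := key 2
    exact ⟨by linarith, by linarith, by linarith⟩
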